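/- arXiv:1211.0308 — 2 statements merged into one kernel-verified Lean document; each statement's English description precedes it below -/
import Mathlib

section
/- Let α, β > 0 with αβ < 1, m_α = √(2α(1/√(αβ) - 1)), m_β = √(2β(1/√(αβ) - 1)), and q = (1+√(αβ))/(1-√(αβ)). If operators x̂, p̂ on a complex inner product space satisfy x̂p̂ - p̂x̂ = i(1 + α x̂² + β p̂²), then the operators b = (1/2)(m_α x̂ + i m_β p̂) and b† = (1/2)(m_α x̂ - i m_β p̂) satisfy b b† - q b† b = 1 (as an algebraic identity in the associated operator algebra). -/
theorem q_like_realization {A : Type*} [Ring A] [Algebra ℂ A]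
    (α β : ℝ) (hα : 0 < α) (hβ : 0 < β) (hαβ : α * β < 1)
    (x p : A)
    (hcomm : x * p - p * x =
      Complex.I • ((1 : A) + (α : ℂ) • x ^ 2 + (β : ℂ) • p ^ 2)) :
    let mα : ℝ := Real.sqrt (2 * α * (1 / Real.sqrt (α * β) - 1))
    let mβ : ℝ := Real.sqrt (2 * β * (1 / Real.sqrt (α * β) - 1))
    let q : ℝ := (1 + Real.sqrt (α * β)) / (1 - Real.sqrt (α * β))
    let b : A := (1 / 2 : ℂ) • ((mα : ℂ) • x + (Complex.I * (mβ : ℂ)) • p)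
    let bdag : A := (1 / 2 : ℂ) • ((mα : ℂ) • x - (Complex.I * (mβ : ℂ)) • p)
    b * bdag - (q : ℂ) • (bdag * b) = 1 := by
  intro mα mβ q b bdag
  set s : ℝ := Real.sqrt (α * β) with hs
  have hs0 : 0 < s := Real.sqrt_pos.mpr (by positivity)
  have hs1 : s < 1 := by
    rw [hs, show (1:ℝ) = Real.sqrt 1 by simp]
    exact Real.sqrt_lt_sqrt (by positivity) hαβ
  have hs2 : s ^ 2 = α * β := Real.sq_sqrt (by positivity)
  have hinv : (0:ℝ) ≤ 1 / s - 1 := by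
    rw [sub_nonneg, le_div_iff₀ hs0]; linarith
  have hmα2 : mα ^ 2 = 2 * α * (1 / s - 1) :=
    Real.sq_sqrt (by positivity)
  have hmβ2 : mβ ^ 2 = 2 * β * (1 / s - 1) :=
    Real.sq_sqrt (by positivity)
  have hmm : mα * mβ = 2 * (1 - s) := by
    rw [show mα * mβ = Real.sqrt ((2 * α * (1 / s - 1)) * (2 * β * (1 / s - 1))) from
      (Real.sqrt_mul (by positivity) _).symm]
    rw [show (2 * α * (1 / s - 1)) * (2 * β * (1 / s - 1)) = (2 * (1 - s))^2 by
      field_simp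
      nlinarith [hs2]]
    exact Real.sqrt_sq (by linarith)
  -- key scalar identities
  have h1s : (1:ℝ) - s ≠ 0 := by linarith
  have hq : q * (1 - s) = 1 + s := div_mul_cancel₀ _ h1s
  have e3 : (1 + q) * (mα * mβ) = 4 := by
    rw [hmm]; linear_combination 2 * hq
  have e1 : (1 - q) * mα ^ 2 + (1 + q) * (mα * mβ) * α = 0 := by
    rw [hmα2, hmm]
    field_simp
    linear_combination (2 * α * s - 2 * α) * hq
  have e2 : (1 - q) * mβ ^ 2 + (1 + q) * (mα * mβ) * β = 0 := by
    rw [hmβ2, hmm]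
    field_simp
    linear_combination (2 * β * s - 2 * β) * hq
  -- complex versions
  have c1 : ((1:ℂ) - q) * (mα:ℂ) ^ 2 + ((1:ℂ) + q) * ((mα:ℂ) * mβ) * α = 0 := by
    exact_mod_cast congrArg (Complex.ofReal) e1
  have c2 : ((1:ℂ) - q) * (mβ:ℂ) ^ 2 + ((1:ℂ) + q) * ((mα:ℂ) * mβ) * β = 0 := by
    exact_mod_cast congrArg (Complex.ofReal) e2
  have c3 : ((1:ℂ) + q) * ((mα:ℂ) * mβ) = 4 := by
    exact_mod_cast congrArg (Complex.ofReal) e3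
  clear_value mα mβ q
  -- now the algebra
  have hxp : x * p = Complex.I • ((1 : A) + (α : ℂ) • x ^ 2 + (β : ℂ) • p ^ 2) + p * x :=
    sub_eq_iff_eq_add.mp hcomm
  show b * bdag - (q : ℂ) • (bdag * b) = 1
  simp only [b, bdag, mul_add, add_mul, mul_sub, sub_mul, smul_mul_assoc,
    mul_smul_comm, smul_smul, smul_add, smul_sub]
  rw [hxp]
  simp only [smul_add, smul_smul, smul_sub, pow_two]
  match_scalars
  all_goals first
    | linear_combination (1 / 4 : ℂ) * c1 - ((1 + (q:ℂ)) * mα * mβ * α / 4) * Complex.I_sq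
    | linear_combination -(1 / 4 : ℂ) * c1 + ((1 + (q:ℂ)) * mα * mβ * α / 4) * Complex.I_sq
    | linear_combination (1 / 4 : ℂ) * c2 - ((1 + (q:ℂ)) * mα * mβ * β / 4) * Complex.I_sq
    | linear_combination -(1 / 4 : ℂ) * c2 + ((1 + (q:ℂ)) * mα * mβ * β / 4) * Complex.I_sq
    | linear_combination (1 / 4 : ℂ) * c3 - ((1 + (q:ℂ)) * mα * mβ / 4) * Complex.I_sq
    | linear_combination -(1 / 4 : ℂ) * c3 + ((1 + (q:ℂ)) * mα * mβ / 4) * Complex.I_sq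
    | linear_combination (-(Complex.I ^ 2) / 4) * c1
    | linear_combination ((Complex.I ^ 2) / 4) * c1
    | linear_combination (-(Complex.I ^ 2) / 4) * c2
    | linear_combination ((Complex.I ^ 2) / 4) * c2
    | linear_combination (-(Complex.I ^ 2) / 4) * c3
    | linear_combination ((Complex.I ^ 2) / 4) * c3
    | ring
end

section
/- If x̂ and p̂ are symmetric operators on a complex inner product space with standard deviations Δx̂, Δp̂ in a unit state ψ, and [x̂,p̂]ψ = i(1 + α x̂² + β p̂²)ψ with α, β ≥ 0, then Δx̂ · Δp̂ ≥ (1/2)(1 + α(Δx̂)² + β(Δp̂)²) whenever ⟨ψ, x̂ψ⟩ = ⟨ψ, p̂ψ⟩ = 0 (so that ⟨x̂²⟩ = (Δx̂)², ⟨p̂²⟩ = (Δp̂)²). -/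
/-!
The expectation of the commutator of two symmetric operators is purely imaginary,
`⟪ψ, [A, B] ψ⟫ = 2i · Im ⟪Aψ, Bψ⟫`, so Cauchy–Schwarz bounds its size by `2 ‖Aψ‖ ‖Bψ‖`
(Robertson). For `x̂, p̂` the deformed commutation relation turns the left side into
`1 + α ⟪x̂²⟫ + β ⟪p̂²⟫`, and symmetry gives `⟪ψ, x̂² ψ⟫ = ‖x̂ψ‖²`, `⟪ψ, p̂² ψ⟫ = ‖p̂ψ‖²`.
-/

open scoped InnerProductSpace

namespace LinearMap.IsSymmetric

variable {H : Type*} [NormedAddCommGroup H] [InnerProductSpace ℂ H] {A B : H →ₗ[ℂ] H}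

theorem inner_apply_apply_self (hA : A.IsSymmetric) (ψ : H) :
    ⟪ψ, A (A ψ)⟫_ℂ = ((‖A ψ‖ ^ 2 : ℝ) : ℂ) := by
  rw [← hA, inner_self_eq_norm_sq_to_K]
  norm_cast

theorem norm_apply_eq_of_inner_apply_apply_self (hA : A.IsSymmetric) {ψ : H} {d : ℝ}
    (hd : 0 ≤ d) (h : ((d ^ 2 : ℝ) : ℂ) = ⟪ψ, A (A ψ)⟫_ℂ) : ‖A ψ‖ = d := by
  rw [hA.inner_apply_apply_self, Complex.ofReal_inj] at h
  exact (pow_left_inj₀ (norm_nonneg _) hd two_ne_zero).mp h.symm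

theorem inner_commutator_apply (hA : A.IsSymmetric) (hB : B.IsSymmetric) (ψ : H) :
    ⟪ψ, A (B ψ) - B (A ψ)⟫_ℂ = ((2 * (⟪A ψ, B ψ⟫_ℂ).im : ℝ) : ℂ) * Complex.I := by
  rw [inner_sub_right, ← hA ψ, ← hB ψ, ← inner_conj_symm (B ψ) (A ψ), Complex.sub_conj]

theorem im_inner_commutator_apply_le (hA : A.IsSymmetric) (hB : B.IsSymmetric) (ψ : H) :
    (⟪ψ, A (B ψ) - B (A ψ)⟫_ℂ).im ≤ 2 * (‖A ψ‖ * ‖B ψ‖) := by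
  rw [hA.inner_commutator_apply hB, Complex.mul_I_im, Complex.ofReal_re]
  gcongr
  exact (le_abs_self _).trans <| (Complex.abs_im_le_norm _).trans (norm_inner_le_norm _ _)

end LinearMap.IsSymmetric

theorem deformed_uncertainty_relation_general {H : Type*} [NormedAddCommGroup H]
    [InnerProductSpace ℂ H]
    (x p : H →ₗ[ℂ] H)
    (hx : ∀ u v : H, ⟪x u, v⟫_ℂ = ⟪u, x v⟫_ℂ)
    (hp : ∀ u v : H, ⟪p u, v⟫_ℂ = ⟪u, p v⟫_ℂ)
    (ψ : H) (hψ : ‖ψ‖ = 1)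
    (α β : ℝ)
    (Δx Δp : ℝ) (hΔx0 : 0 ≤ Δx) (hΔp0 : 0 ≤ Δp)
    (hΔx : ((Δx ^ 2 : ℝ) : ℂ) = ⟪ψ, x (x ψ)⟫_ℂ)
    (hΔp : ((Δp ^ 2 : ℝ) : ℂ) = ⟪ψ, p (p ψ)⟫_ℂ)
    (hcomm : x (p ψ) - p (x ψ) =
      Complex.I • (ψ + (α : ℂ) • x (x ψ) + (β : ℂ) • p (p ψ))) :
    Δx * Δp ≥ (1 / 2) * (1 + α * Δx ^ 2 + β * Δp ^ 2) := by
  have hx : x.IsSymmetric := hx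
  have hp : p.IsSymmetric := hp
  have hψψ : ⟪ψ, ψ⟫_ℂ = 1 := by rw [inner_self_eq_norm_sq_to_K, hψ]; norm_num
  have hcomm_mean : (⟪ψ, x (p ψ) - p (x ψ)⟫_ℂ).im = 1 + α * Δx ^ 2 + β * Δp ^ 2 := by
    rw [hcomm, inner_smul_right, inner_add_right, inner_add_right, inner_smul_right,
      inner_smul_right, ← hΔx, ← hΔp, hψψ]
    exact_mod_cast Complex.I_mul_im _ |>.trans (Complex.ofReal_re _)
  have robertson := hx.im_inner_commutator_apply_le hp ψ
  rw [hcomm_mean, hx.norm_apply_eq_of_inner_apply_apply_self hΔx0 hΔx,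
    hp.norm_apply_eq_of_inner_apply_apply_self hΔp0 hΔp] at robertson
  linarith

theorem deformed_uncertainty_relation {H : Type*} [NormedAddCommGroup H]
    [InnerProductSpace ℂ H]
    (x p : H →ₗ[ℂ] H)
    (hx : ∀ u v : H, ⟪x u, v⟫_ℂ = ⟪u, x v⟫_ℂ)
    (hp : ∀ u v : H, ⟪p u, v⟫_ℂ = ⟪u, p v⟫_ℂ)
    (ψ : H) (hψ : ‖ψ‖ = 1)
    (hxmean : ⟪ψ, x ψ⟫_ℂ = 0) (hpmean : ⟪ψ, p ψ⟫_ℂ = 0)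
    (α β : ℝ) (hα : 0 ≤ α) (hβ : 0 ≤ β)
    (Δx Δp : ℝ) (hΔx0 : 0 ≤ Δx) (hΔp0 : 0 ≤ Δp)
    (hΔx : ((Δx ^ 2 : ℝ) : ℂ) = ⟪ψ, x (x ψ)⟫_ℂ)
    (hΔp : ((Δp ^ 2 : ℝ) : ℂ) = ⟪ψ, p (p ψ)⟫_ℂ)
    (hcomm : x (p ψ) - p (x ψ) =
      Complex.I • (ψ + (α : ℂ) • x (x ψ) + (β : ℂ) • p (p ψ))) :
    Δx * Δp ≥ (1 / 2) * (1 + α * Δx ^ 2 + β * Δp ^ 2) :=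
  deformed_uncertainty_relation_general x p hx hp ψ hψ α β Δx Δp hΔx0 hΔp0 hΔx hΔp hcomm
end
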